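/- The partial derivative ∂_V W(S,0) of the optimal-control cost W(S,V) at V = 0 equals (1/(2β)) log((1+S)/(1-S)), i.e. equals (1/(2β)) Φ'(S) where Φ(S) = (1+S)log(1+S) + (1-S)log(1-S). -/

import Mathlib

open Real Set

noncomputable def Lag (β S Ap Am : ℝ) : ℝ :=
  β⁻¹ * Ap * (Real.log Ap - 1) * ((1+S)/2) + β⁻¹ * Am * (Real.log Am - 1) * ((1-S)/2)

noncomputable def Ap (S V : ℝ) : ℝ := (Real.sqrt (V^2 + (1-S)*(1+S)) - V) / (1+S)

noncomputable def Am (S V : ℝ) : ℝ := (Real.sqrt (V^2 + (1-S)*(1+S)) + V) / (1-S)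

noncomputable def Wfun (β J S V : ℝ) : ℝ :=
  Lag β S (Ap S V) (Am S V) - (1/2) * J * S^2 - (-(J/2) - 1/(2*β^2*J))

noncomputable def Phi (S : ℝ) : ℝ := (1+S) * Real.log (1+S) + (1-S) * Real.log (1-S)

theorem W_velocity_deriv_at_zero (β J S : ℝ) (hβ : 0 < β) (hJ : 0 < J)
    (hS : S ∈ Set.Ioo (-1:ℝ) 1) :
    deriv (fun V => Wfun β J S V) 0 = (1/(2*β)) * Real.log ((1+S)/(1-S)) ∧
    deriv (fun V => Wfun β J S V) 0 = (1/(2*β)) * deriv Phi S := by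
  obtain ⟨h1, h2⟩ := hS
  have hS1 : (0:ℝ) < 1 + S := by linarith
  have hS2 : (0:ℝ) < 1 - S := by linarith
  have hprodpos : (0:ℝ) < (1-S)*(1+S) := mul_pos hS2 hS1
  set r0 := Real.sqrt ((0:ℝ)^2 + (1-S)*(1+S)) with hr0def
  have hr0pos : 0 < r0 := by
    rw [hr0def]; apply Real.sqrt_pos.2; nlinarith
  have hAp0 : Ap S 0 = r0 / (1+S) := by simp [Ap, hr0def]
  have hAm0 : Am S 0 = r0 / (1-S) := by simp [Am, hr0def]
  have hAp0pos : 0 < Ap S 0 := by rw [hAp0]; positivity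
  have hAm0pos : 0 < Am S 0 := by rw [hAm0]; positivity
  have hinner : HasDerivAt (fun V : ℝ => V^2 + (1-S)*(1+S)) 0 0 := by
    have := (hasDerivAt_pow 2 (0:ℝ)).add_const ((1-S)*(1+S))
    simpa using this
  have hsqrt : HasDerivAt (fun V : ℝ => Real.sqrt (V^2 + (1-S)*(1+S))) 0 0 := by
    have hne : (0:ℝ)^2 + (1-S)*(1+S) ≠ 0 := by nlinarith
    have := hinner.sqrt hne
    simpa using this
  have hAp : HasDerivAt (fun V => Ap S V) (-(1+S)⁻¹) 0 := by
    have h := (hsqrt.sub (hasDerivAt_id 0)).div_const (1+S)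
    have heq : (fun V => Ap S V) = fun x => (Real.sqrt (x^2+(1-S)*(1+S)) - id x)/(1+S) := by
      funext x; simp [Ap]
    rw [heq]
    refine h.congr_deriv ?_
    ring
  have hAm : HasDerivAt (fun V => Am S V) ((1-S)⁻¹) 0 := by
    have h := (hsqrt.add (hasDerivAt_id 0)).div_const (1-S)
    have heq : (fun V => Am S V) = fun x => (Real.sqrt (x^2+(1-S)*(1+S)) + id x)/(1-S) := by
      funext x; simp [Am]
    rw [heq]
    refine h.congr_deriv ?_
    ring
  -- derivative of x ↦ x * (log x - 1) composed
  have hgp : HasDerivAt (fun V => Ap S V * (Real.log (Ap S V) - 1))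
      ((-(1+S)⁻¹) * Real.log (Ap S 0)) 0 := by
    have hlog : HasDerivAt (fun V => Real.log (Ap S V)) ((-(1+S)⁻¹) / Ap S 0) 0 :=
      hAp.log (ne_of_gt hAp0pos)
    have := hAp.mul (hlog.sub_const 1)
    refine this.congr_deriv ?_
    field_simp
    ring
  have hgm : HasDerivAt (fun V => Am S V * (Real.log (Am S V) - 1))
      (((1-S)⁻¹) * Real.log (Am S 0)) 0 := by
    have hlog : HasDerivAt (fun V => Real.log (Am S V)) (((1-S)⁻¹) / Am S 0) 0 :=
      hAm.log (ne_of_gt hAm0pos)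
    have := hAm.mul (hlog.sub_const 1)
    refine this.congr_deriv ?_
    field_simp
    ring
  set D : ℝ := β⁻¹ * ((-(1+S)⁻¹) * Real.log (Ap S 0)) * ((1+S)/2)
      + β⁻¹ * (((1-S)⁻¹) * Real.log (Am S 0)) * ((1-S)/2) with hD
  have hW : HasDerivAt (fun V => Wfun β J S V) D 0 := by
    have h := ((((hgp.const_mul β⁻¹).mul_const ((1+S)/2)).add
      ((hgm.const_mul β⁻¹).mul_const ((1-S)/2))).sub_const ((1/2) * J * S^2)).sub_const
      (-(J/2) - 1/(2*β^2*J))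
    have heq : (fun V => Wfun β J S V) = fun V =>
        (β⁻¹ * (Ap S V * (Real.log (Ap S V) - 1)) * ((1+S)/2)
          + β⁻¹ * (Am S V * (Real.log (Am S V) - 1)) * ((1-S)/2)
          - (1/2) * J * S^2) - (-(J/2) - 1/(2*β^2*J)) := by
      funext V; simp [Wfun, Lag]; ring
    rw [heq]
    exact h
  have hderiv := hW.deriv
  have hval : D = (1/(2*β)) * Real.log ((1+S)/(1-S)) := by
    rw [hD, hAp0, hAm0, Real.log_div (ne_of_gt hr0pos) (ne_of_gt hS1),
      Real.log_div (ne_of_gt hr0pos) (ne_of_gt hS2),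
      Real.log_div (ne_of_gt hS1) (ne_of_gt hS2)]
    field_simp
    ring
  have hPhi : deriv Phi S = Real.log ((1+S)/(1-S)) := by
    have hp : HasDerivAt Phi (Real.log (1+S) - Real.log (1-S)) S := by
      have ha : HasDerivAt (fun S : ℝ => (1+S) * Real.log (1+S))
          (Real.log (1+S) + 1) S := by
        have h1' : HasDerivAt (fun S : ℝ => 1 + S) 1 S := by
          simpa using (hasDerivAt_id S).const_add 1
        have := h1'.mul (h1'.log (ne_of_gt hS1))
        refine this.congr_deriv ?_
        field_simp
      have hb : HasDerivAt (fun S : ℝ => (1-S) * Real.log (1-S))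
          (-(Real.log (1-S) + 1)) S := by
        have h2' : HasDerivAt (fun S : ℝ => 1 - S) (-1) S := by
          simpa using (hasDerivAt_id S).const_sub 1
        have := h2'.mul (h2'.log (ne_of_gt hS2))
        refine this.congr_deriv ?_
        field_simp
        ring
      have := ha.add hb
      have heq : Phi = fun x : ℝ => (1+x) * Real.log (1+x) + (1-x) * Real.log (1-x) := by
        funext x; simp [Phi]
      rw [heq]
      refine this.congr_deriv ?_
      ring
    rw [hp.deriv, Real.log_div (ne_of_gt hS1) (ne_of_gt hS2)]
  constructor
  · rw [hderiv, hval]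
  · rw [hderiv, hval, hPhi]
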